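/- For any monoid variety V and any word w, the variety generated by the factor monoid M(w) is contained in V if and only if w is an isoterm for V, i.e., V satisfies no nontrivial identity of the form w ≈ v. -/

import Mathlib

abbrev Word := List ℕ

def subst (φ : ℕ → Word) (w : Word) : Word := w.flatMap φ

inductive Deduce (S : Set (Word × Word)) : Word → Word → Prop
  | refl (w : Word) : Deduce S w w
  | symm {u v : Word} : Deduce S u v → Deduce S v u
  | trans {u v w : Word} : Deduce S u v → Deduce S v w → Deduce S u w
  | step (a b : Word) (φ : ℕ → Word) {s t : Word} (h : (s, t) ∈ S) :
      Deduce S (a ++ subst φ s ++ b) (a ++ subst φ t ++ b)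

def FM (w : Word) : Type := Option {u : Word // u <:+: w}

def fmul {w : Word} : FM w → FM w → FM w
  | some u, some v =>
      if h : (u.1 ++ v.1) <:+: w then some ⟨u.1 ++ v.1, h⟩ else none
  | _, _ => none

def fone (w : Word) : FM w := some ⟨[], List.nil_infix⟩

theorem fmul_none_left {w : Word} (a : FM w) : fmul none a = none := rfl

theorem fmul_none_right {w : Word} (a : FM w) : fmul a none = none := by
  rcases a with _ | u <;> rfl

theorem fmul_some {w : Word} (u v : {u : Word // u <:+: w}) :
    fmul (some u) (some v) =
      if h : (u.1 ++ v.1) <:+: w then some ⟨u.1 ++ v.1, h⟩ else none := rfl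

theorem fmul_assoc {w : Word} (a b c : FM w) : fmul (fmul a b) c = fmul a (fmul b c) := by
  rcases a with _ | u
  · rfl
  rcases b with _ | v
  · rfl
  rcases c with _ | t
  · erw [fmul_none_right, fmul_none_right]
  rw [fmul_some, fmul_some]
  by_cases h : (u.1 ++ v.1 ++ t.1) <:+: w
  · have h1 : (u.1 ++ v.1) <:+: w := List.IsInfix.trans ⟨[], t.1, by simp⟩ h
    have h2 : (v.1 ++ t.1) <:+: w := List.IsInfix.trans ⟨u.1, [], by simp⟩ h
    rw [dif_pos h1, fmul_some, dif_pos h2, fmul_some, dif_pos h,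
      dif_pos (show (u.1 ++ (v.1 ++ t.1)) <:+: w by simpa [List.append_assoc] using h)]
    simp [List.append_assoc]
    rfl
  · by_cases h1 : (u.1 ++ v.1) <:+: w
    · rw [dif_pos h1, fmul_some, dif_neg h]
      by_cases h2 : (v.1 ++ t.1) <:+: w
      · rw [dif_pos h2, fmul_some,
          dif_neg (fun hh => h (by simpa [List.append_assoc] using hh))]
      · erw [dif_neg h2, fmul_none_right]
    · erw [dif_neg h1, fmul_none_left]
      by_cases h2 : (v.1 ++ t.1) <:+: w
      · rw [dif_pos h2, fmul_some,
          dif_neg (fun hh => h1 (List.IsInfix.trans ⟨[], t.1, by simp⟩ hh))]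
      · erw [dif_neg h2, fmul_none_right]

instance (w : Word) : Monoid (FM w) where
  mul := fmul
  one := fone w
  mul_assoc := fmul_assoc
  one_mul := by
    rintro (_ | u)
    · rfl
    · show fmul (fone w) (some u) = some u
      rw [fone, fmul_some, dif_pos (by simpa using u.2)]
      simp
      rfl
  mul_one := by
    rintro (_ | u)
    · rfl
    · show fmul (some u) (fone w) = some u
      rw [fone, fmul_some, dif_pos (by simpa using u.2)]
      simp
      rfl

def SatId (M : Type) [Monoid M] (p : Word × Word) : Prop :=
  ∀ φ : ℕ → M, (p.1.map φ).prod = (p.2.map φ).prod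

def VSat (E : Set (Word × Word)) (p : Word × Word) : Prop :=
  ∀ (M : Type) [Monoid M], (∀ q ∈ E, SatId M q) → SatId M p

def ids0 : Set (Word × Word) :=
  {([0,1,2,0,3,1],[1,0,2,0,3,1]), ([0,2,0,1,3,1],[0,2,1,0,3,1]), ([0,2,1,3,0,1],[0,2,1,3,1,0])}

def idA (n : ℕ) : Word × Word :=
  (List.replicate n 0 ++ (List.range n).map (· + 1),
   ((List.range n).map (fun i => [i + 1, 0])).flatten)

def rigid (e₀ : ℕ) (es : List ℕ) : Word :=
  List.replicate e₀ 0 ++ (((List.range es.length).zip es).map (fun p => (p.1 + 1) :: List.replicate p.2 0)).flatten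

def Bword (n i : ℕ) : Word := List.replicate i 0 ++ 1 :: List.replicate (n - 1 - i) 0

def wmr (m r : ℕ) : Word := rigid (m - 1) (List.replicate r (m - 1))

/-! Evaluating each letter `x` at the factor `x` of `w` sends a word `u` to `u` if it is a factor of
`w` and to zero otherwise; so if `M(w)` lies in `V`, an identity `w ≈ v` of `V` gives `v = w`.
Conversely, every assignment into `M(w)` is evaluation along a substitution `ψ`, and if an identity
`s ≈ t` of `V` sent `ψ s` to a different value than `ψ t`, one of them would be a factor of `w`,
say `w = a (ψ s) b`, and `w ≈ a (ψ t) b` would be a nontrivial identity of `V`. -/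

section VSat

variable {E : Set (Word × Word)} {s t : Word}

theorem VSat.of_mem (h : (s, t) ∈ E) : VSat E (s, t) :=
  fun _ _ hM => hM _ h

theorem VSat.symm (h : VSat E (s, t)) : VSat E (t, s) :=
  fun M _ hM φ => (h M hM φ).symm

theorem prod_map_subst {M : Type} [Monoid M] (θ : ℕ → M) (ψ : ℕ → Word) (u : Word) :
    ((subst ψ u).map θ).prod = (u.map fun x => ((ψ x).map θ).prod).prod := by
  induction u with
  | nil => rfl
  | cons x u ih =>
    simp only [subst, List.flatMap_cons, List.map_append, List.prod_append, List.map_cons,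
      List.prod_cons] at ih ⊢
    rw [ih]

theorem VSat.subst (ψ : ℕ → Word) (h : VSat E (s, t)) : VSat E (subst ψ s, subst ψ t) :=
  fun M _ hM θ => by
    simpa only [prod_map_subst] using h M hM fun x => ((ψ x).map θ).prod

theorem VSat.append_context (a b : Word) (h : VSat E (s, t)) :
    VSat E (a ++ s ++ b, a ++ t ++ b) :=
  fun M _ hM θ => by
    simp only [List.map_append, List.prod_append]
    rw [h M hM θ]

end VSat

namespace FM

def ofWord (w u : Word) : FM w :=
  if h : u <:+: w then some ⟨u, h⟩ else none

variable {w : Word}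

theorem ofWord_of_infix {u : Word} (h : u <:+: w) : ofWord w u = (some ⟨u, h⟩ : FM w) :=
  dif_pos h

theorem ofWord_of_not_infix {u : Word} (h : ¬ u <:+: w) : ofWord w u = (none : FM w) :=
  dif_neg h

theorem mul_def (a b : FM w) : a * b = fmul a b := rfl

theorem ofWord_nil : ofWord w [] = 1 :=
  ofWord_of_infix List.nil_infix

theorem ofWord_append (u v : Word) : ofWord w (u ++ v) = ofWord w u * ofWord w v := by
  rw [mul_def]
  by_cases huv : u ++ v <:+: w
  · have hu : u <:+: w := (List.infix_append [] u v).trans (by simpa using huv)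
    have hv : v <:+: w := (List.infix_append u v []).trans (by simpa using huv)
    rw [ofWord_of_infix huv, ofWord_of_infix hu, ofWord_of_infix hv, fmul_some, dif_pos huv]
  · rw [ofWord_of_not_infix huv]
    by_cases hu : u <:+: w
    · by_cases hv : v <:+: w
      · rw [ofWord_of_infix hu, ofWord_of_infix hv, fmul_some, dif_neg huv]
      · rw [ofWord_of_not_infix hv, fmul_none_right]
    · rw [ofWord_of_not_infix hu, fmul_none_left]

theorem prod_map_ofWord (ψ : ℕ → Word) (u : Word) :
    (u.map fun x => ofWord w (ψ x)).prod = ofWord w (subst ψ u) := by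
  induction u with
  | nil => exact ofWord_nil.symm
  | cons x u ih =>
    rw [List.map_cons, List.prod_cons, ih, subst, subst, List.flatMap_cons, ofWord_append]

theorem prod_map_ofWord_singleton (u : Word) :
    (u.map fun x => ofWord w [x]).prod = ofWord w u := by
  rw [prod_map_ofWord, subst, List.flatMap_singleton']

theorem exists_ofWord_eq (a : FM w) : ∃ u, ofWord w u = a := by
  rcases a with _ | ⟨u, hu⟩
  · exact ⟨0 :: w, ofWord_of_not_infix fun h => by simpa using h.length_le⟩
  · exact ⟨u, ofWord_of_infix hu⟩

theorem eq_of_ofWord_eq_ofWord_self {v : Word} (h : ofWord w v = ofWord w w) : v = w := by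
  rw [ofWord_of_infix (List.infix_refl w)] at h
  by_cases hv : v <:+: w
  · rw [ofWord_of_infix hv] at h
    exact congrArg Subtype.val (Option.some.inj h)
  · rw [ofWord_of_not_infix hv] at h
    exact absurd h (Option.some_ne_none _).symm

end FM

section Isoterm

variable {w : Word} {E : Set (Word × Word)}

theorem eq_of_isoterm_of_infix (hiso : ∀ v, VSat E (w, v) → v = w) {s t : Word}
    (hst : VSat E (s, t)) (hs : s <:+: w) : t = s := by
  obtain ⟨a, b, rfl⟩ := hs
  exact List.append_cancel_right (List.append_cancel_left
    (by simpa only [List.append_assoc] using hiso _ (hst.append_context a b)))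

theorem ofWord_eq_of_isoterm (hiso : ∀ v, VSat E (w, v) → v = w) {s t : Word}
    (hst : VSat E (s, t)) : FM.ofWord w s = FM.ofWord w t := by
  by_cases hs : s <:+: w
  · rw [eq_of_isoterm_of_infix hiso hst hs]
  by_cases ht : t <:+: w
  · rw [eq_of_isoterm_of_infix hiso hst.symm ht]
  rw [FM.ofWord_of_not_infix hs, FM.ofWord_of_not_infix ht]

end Isoterm

/-- For any monoid variety `V` (the class of monoids satisfying a set `E`
of identities) and any word `w`, the variety generated by the factor monoid `M(w)` is
contained in `V` (equivalently, `M(w)` satisfies all identities of `E`) iff `w` is an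
isoterm for `V`. -/
theorem stmt2 (w : Word) (E : Set (Word × Word)) :
    (∀ p ∈ E, SatId (FM w) p) ↔ (∀ v : Word, VSat E (w, v) → v = w) := by
  constructor
  · intro hE v hv
    have hwv := hv (FM w) hE fun x => FM.ofWord w [x]
    simp only [FM.prod_map_ofWord_singleton] at hwv
    exact FM.eq_of_ofWord_eq_ofWord_self hwv.symm
  · rintro hiso ⟨s, t⟩ hst φ
    choose ψ hψ using fun x => FM.exists_ofWord_eq (φ x)
    have hφ : φ = fun x => FM.ofWord w (ψ x) := funext fun x => (hψ x).symm
    subst hφ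
    simp only [FM.prod_map_ofWord]
    exact ofWord_eq_of_isoterm hiso ((VSat.of_mem hst).subst ψ)
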